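/- For any 0 < ε < 1 and 0 < α < 1 there exist constants C > 0 such that the sum of ∏_{i=1}^N (d_i!)^α over all N-tuples (d_1,…,d_N) of nonnegative integers with Σ d_i = N−1 and max_i d_i ≤ ε(N−1) is at most C·N^{2α/ε}·((N−1)!)^α·ε^{αN}·4^N. In particular, for ε small enough this sum is o(((N−1)!)^α) as N → ∞. -/

import Mathlib

open Filter

/-- `Z w N n = Σ_{d_1+⋯+d_N = n} ∏_{i=1}^N w_{d_i+1}` (and `Z w 0 n = [n = 0]`). -/
noncomputable def Z (w : ℕ → ℝ) (N n : ℕ) : ℝ :=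
  ∑ d ∈ Finset.Nat.antidiagonalTuple N n, ∏ i, w (d i + 1)

open scoped Classical in
/-- The contribution `Z_N(0,ε)` to `N·Z_N` from tuples with all parts at most `ε(N−1)`. -/
noncomputable def Zsmall (α ε : ℝ) (N : ℕ) : ℝ :=
  ∑ d ∈ (Finset.Nat.antidiagonalTuple N (N - 1)).filter
      (fun d => ∀ i, (d i : ℝ) ≤ ε * ((N : ℝ) - 1)),
    ∏ i, ((d i).factorial : ℝ) ^ α


lemma nat_fact_pow_le {d m : ℕ} (h : d ≤ m) :
    d.factorial ^ m ≤ m.factorial ^ d := by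
  induction m, h using Nat.le_induction with
  | base => rfl
  | succ m hdm ih =>
      have h1 : d.factorial ≤ (m+1)^d :=
        le_trans (Nat.factorial_le_pow d) (Nat.pow_le_pow_left (by omega) d)
      calc d.factorial ^ (m+1) = d.factorial ^ m * d.factorial := pow_succ _ _
        _ ≤ m.factorial ^ d * (m+1)^d := Nat.mul_le_mul ih h1
        _ = ((m+1).factorial)^d := by
            rw [← mul_pow, Nat.factorial_succ, mul_comm]

lemma pow_self_le_exp_mul_factorial (n : ℕ) :
    (n:ℝ)^n ≤ Real.exp 1 ^ n * n.factorial := by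
  induction n with
  | zero => simp
  | succ n ih =>
    rcases Nat.eq_zero_or_pos n with h | h
    · subst h
      simpa using Real.one_le_exp (by norm_num : (0:ℝ) ≤ 1)
    · have hn : (0:ℝ) < n := by exact_mod_cast h
      have h1 : ((n:ℝ)+1) ≤ n * Real.exp (1/n) := by
        have := Real.add_one_le_exp (1/(n:ℝ))
        have := mul_le_mul_of_nonneg_left this hn.le
        calc ((n:ℝ)+1) = n * (1/n + 1) := by field_simp; ring
          _ ≤ n * Real.exp (1/n) := by nlinarith [Real.add_one_le_exp (1/(n:ℝ))]
      have hkey : ((n:ℝ)+1)^n ≤ Real.exp 1 * (n:ℝ)^n := by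
        calc ((n:ℝ)+1)^n ≤ (n * Real.exp (1/n))^n := by
              apply pow_le_pow_left₀ (by positivity) h1
          _ = (n:ℝ)^n * Real.exp (1/n) ^ n := mul_pow _ _ _
          _ = (n:ℝ)^n * Real.exp 1 := by
              rw [← Real.exp_nat_mul]
              congr 2
              field_simp
          _ = Real.exp 1 * (n:ℝ)^n := mul_comm _ _
      have hcast : ((n+1:ℕ):ℝ) = (n:ℝ)+1 := by push_cast; ring
      rw [hcast]
      calc ((n:ℝ)+1)^(n+1) = ((n:ℝ)+1) * ((n:ℝ)+1)^n := by ring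
        _ ≤ ((n:ℝ)+1) * (Real.exp 1 * (n:ℝ)^n) := by
            apply mul_le_mul_of_nonneg_left hkey (by positivity)
        _ ≤ ((n:ℝ)+1) * (Real.exp 1 * (Real.exp 1 ^ n * n.factorial)) := by
            apply mul_le_mul_of_nonneg_left _ (by positivity)
            exact mul_le_mul_of_nonneg_left ih (Real.exp_pos 1).le
        _ = Real.exp 1 ^ (n+1) * ((n+1).factorial) := by
            rw [Nat.factorial_succ]
            push_cast
            ring

lemma factorial_le_aux (n : ℕ) (h : 1 ≤ n) :
    (n.factorial : ℝ) * Real.exp 1 ^ n ≤ Real.exp 1 * (n:ℝ)^(n+1) := by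
  induction n, h using Nat.le_induction with
  | base => simp
  | succ n hn ih =>
    have hn0 : (0:ℝ) < n := by exact_mod_cast hn
    have h1 : Real.exp (1/((n:ℝ)+1)) ≤ ((n:ℝ)+1)/n := by
      have h2 := Real.add_one_le_exp (-(1/((n:ℝ)+1)))
      have h3 : (0:ℝ) < -(1/((n:ℝ)+1)) + 1 := by
        rw [neg_add_eq_sub]
        have : 1/((n:ℝ)+1) < 1 := by
          rw [div_lt_one (by positivity)]; linarith
        linarith
      have h4 : Real.exp (1/((n:ℝ)+1)) ≤ (-(1/((n:ℝ)+1)) + 1)⁻¹ := by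
        have h5 := inv_anti₀ h3 h2
        rwa [Real.exp_neg, inv_inv] at h5
      refine h4.trans ?_
      rw [inv_eq_one_div, div_le_div_iff₀ h3 hn0]
      have hne : ((n:ℝ)+1) ≠ 0 := by positivity
      field_simp
      linarith
    have h3 : Real.exp 1 ≤ (((n:ℝ)+1)/n)^(n+1) := by
      have := pow_le_pow_left₀ (Real.exp_nonneg _) h1 (n+1)
      rw [← Real.exp_nat_mul] at this
      have he : ((n+1:ℕ):ℝ) * (1/((n:ℝ)+1)) = 1 := by
        push_cast; field_simp
      rwa [he] at this
    have hkey : Real.exp 1 * (n:ℝ)^(n+1) ≤ ((n:ℝ)+1)^(n+1) := by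
      calc Real.exp 1 * (n:ℝ)^(n+1) ≤ (((n:ℝ)+1)/n)^(n+1) * (n:ℝ)^(n+1) :=
            mul_le_mul_of_nonneg_right h3 (by positivity)
        _ = ((n:ℝ)+1)^(n+1) := by
            rw [div_pow, div_mul_cancel₀]
            positivity
    have hcast : ((n+1:ℕ):ℝ) = (n:ℝ)+1 := by push_cast; ring
    calc ((n+1).factorial : ℝ) * Real.exp 1 ^ (n+1)
        = ((n:ℝ)+1) * ((n.factorial : ℝ) * Real.exp 1 ^ n) * Real.exp 1 := by
          rw [Nat.factorial_succ]; push_cast; ring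
      _ ≤ ((n:ℝ)+1) * (Real.exp 1 * (n:ℝ)^(n+1)) * Real.exp 1 := by
          have := mul_le_mul_of_nonneg_left ih (by positivity : (0:ℝ) ≤ (n:ℝ)+1)
          exact mul_le_mul_of_nonneg_right this (Real.exp_nonneg 1)
      _ ≤ ((n:ℝ)+1) * (((n:ℝ)+1)^(n+1)) * Real.exp 1 := by
          exact mul_le_mul_of_nonneg_right
            (mul_le_mul_of_nonneg_left hkey (by positivity)) (Real.exp_nonneg 1)
      _ = Real.exp 1 * ((n:ℝ)+1)^(n+1+1) := by ring
      _ = Real.exp 1 * ((n+1:ℕ):ℝ)^(n+1+1) := by rw [hcast]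

lemma rpow_sum_eq {x : ℝ} (hx : 0 < x) {ι : Type*} (s : Finset ι) (f : ι → ℝ) :
    x ^ (∑ i ∈ s, f i) = ∏ i ∈ s, x ^ f i := by
  classical
  induction s using Finset.induction with
  | empty => simp
  | insert _ _ h ih => rw [Finset.sum_insert h, Finset.prod_insert h, Real.rpow_add hx, ih]

lemma per_term {N n : ℕ} (ε : ℝ) (hε0 : 0 < ε) (hε1 : ε < 1)
    (h2 : (2:ℝ) ≤ ε * n) (hnN : n ≤ N)
    (d : Fin N → ℕ) (hsum : ∑ i, d i = n) (hle : ∀ i, (d i : ℝ) ≤ ε * n) :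
    ∏ i, ((d i).factorial : ℝ) ≤
      Real.exp (2/ε) * (N:ℝ) ^ ((2:ℝ)/ε) * ε ^ n * n.factorial := by
  have hn1 : 1 ≤ n := by
    by_contra h
    push_neg at h
    interval_cases n <;> simp_all <;> linarith
  have hnR : (0:ℝ) < n := by exact_mod_cast hn1
  set m : ℕ := ⌊ε * (n:ℝ)⌋₊ with hm
  have hεn0 : (0:ℝ) ≤ ε * n := by positivity
  have hm2 : 2 ≤ m := Nat.le_floor (by exact_mod_cast h2)
  have hm1 : 1 ≤ m := by omega
  have hmR : (1:ℝ) ≤ m := by exact_mod_cast hm1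
  have hm0R : (0:ℝ) < m := by linarith
  have hmne : (m:ℝ) ≠ 0 := ne_of_gt hm0R
  have hmr : (m:ℝ) ≤ ε * n := Nat.floor_le hεn0
  have hm_half : ε * n / 2 ≤ (m:ℝ) := by
    have := Nat.sub_one_lt_floor (ε * (n:ℝ))
    linarith
  have hdiv : (n:ℝ)/m ≤ 2/ε := by
    rw [div_le_div_iff₀ hm0R hε0]
    nlinarith
  have hdiv0 : (0:ℝ) ≤ (n:ℝ)/m := by positivity
  -- Step A+B : ∏ (d i)! ≤ (m!)^(n/m)
  have stepA : ∀ i, ((d i).factorial : ℝ) ≤ (m.factorial : ℝ) ^ ((d i : ℝ)/m) := by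
    intro i
    have hdm : d i ≤ m := Nat.le_floor (by exact_mod_cast hle i)
    have hnat : ((d i).factorial : ℝ) ^ m ≤ (m.factorial : ℝ) ^ (d i) := by
      exact_mod_cast nat_fact_pow_le hdm
    have h1 : (((d i).factorial : ℝ) ^ m) ^ ((1:ℝ)/m) ≤
        ((m.factorial : ℝ) ^ (d i)) ^ ((1:ℝ)/m) :=
      Real.rpow_le_rpow (by positivity) hnat (by positivity)
    calc ((d i).factorial : ℝ)
        = (((d i).factorial : ℝ) ^ m) ^ ((1:ℝ)/m) := by
          rw [← Real.rpow_natCast ((d i).factorial : ℝ) m, ← Real.rpow_mul (by positivity)]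
          rw [mul_one_div, div_self hmne, Real.rpow_one]
      _ ≤ ((m.factorial : ℝ) ^ (d i)) ^ ((1:ℝ)/m) := h1
      _ = (m.factorial : ℝ) ^ ((d i : ℝ)/m) := by
          rw [← Real.rpow_natCast (m.factorial : ℝ) (d i), ← Real.rpow_mul (by positivity)]
          rw [mul_one_div]
  have stepB : ∏ i, ((d i).factorial : ℝ) ≤ (m.factorial : ℝ) ^ ((n:ℝ)/m) := by
    calc ∏ i, ((d i).factorial : ℝ) ≤ ∏ i, (m.factorial : ℝ) ^ ((d i : ℝ)/m) :=
          Finset.prod_le_prod (fun i _ => by positivity) (fun i _ => stepA i)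
      _ = (m.factorial : ℝ) ^ (∑ i, ((d i : ℝ)/m)) := by
          rw [rpow_sum_eq (by positivity)]
      _ = (m.factorial : ℝ) ^ ((n:ℝ)/m) := by
          congr 1
          rw [← Finset.sum_div]
          congr 1
          exact_mod_cast congrArg (Nat.cast : ℕ → ℝ) hsum
  -- Step C: m! ≤ e * m * (m/e)^m
  have stepC : (m.factorial : ℝ) ≤ Real.exp 1 * m * ((m:ℝ)/Real.exp 1)^m := by
    have := factorial_le_aux m hm1
    rw [div_pow, ← mul_div_assoc, le_div_iff₀ (by positivity)]
    calc (m.factorial : ℝ) * Real.exp 1 ^ m ≤ Real.exp 1 * (m:ℝ)^(m+1) := this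
      _ = Real.exp 1 * m * (m:ℝ)^m := by ring
  -- Step D
  have hbase1 : (1:ℝ) ≤ Real.exp 1 * m :=
    one_le_mul_of_one_le_of_one_le (by linarith [Real.one_le_exp (le_refl (0:ℝ)), Real.add_one_le_exp 1] ) hmR
  calc ∏ i, ((d i).factorial : ℝ) ≤ (m.factorial : ℝ) ^ ((n:ℝ)/m) := stepB
    _ ≤ (Real.exp 1 * m * ((m:ℝ)/Real.exp 1)^m) ^ ((n:ℝ)/m) :=
        Real.rpow_le_rpow (by positivity) stepC hdiv0
    _ = (Real.exp 1 * m) ^ ((n:ℝ)/m) * (((m:ℝ)/Real.exp 1)^m) ^ ((n:ℝ)/m) :=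
        Real.mul_rpow (by positivity) (by positivity)
    _ = (Real.exp 1 * m) ^ ((n:ℝ)/m) * ((m:ℝ)/Real.exp 1)^(n:ℕ) := by
        congr 1
        rw [← Real.rpow_natCast ((m:ℝ)/Real.exp 1) m, ← Real.rpow_mul (by positivity)]
        rw [show (m:ℝ) * ((n:ℝ)/m) = (n:ℝ) by field_simp]
        rw [Real.rpow_natCast]
    _ ≤ (Real.exp 1 * N) ^ ((2:ℝ)/ε) * ((m:ℝ)/Real.exp 1)^(n:ℕ) := by
        apply mul_le_mul_of_nonneg_right _ (by positivity)
        calc (Real.exp 1 * m) ^ ((n:ℝ)/m) ≤ (Real.exp 1 * m) ^ ((2:ℝ)/ε) :=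
              Real.rpow_le_rpow_of_exponent_le hbase1 hdiv
          _ ≤ (Real.exp 1 * N) ^ ((2:ℝ)/ε) := by
              apply Real.rpow_le_rpow (by positivity) _ (by positivity)
              have : (m:ℝ) ≤ N := by
                have h1 : (m:ℝ) ≤ n := by nlinarith
                have h2 : (n:ℝ) ≤ N := by exact_mod_cast hnN
                linarith
              nlinarith [Real.exp_pos 1]
    _ ≤ (Real.exp 1 * N) ^ ((2:ℝ)/ε) * (ε * n /Real.exp 1)^(n:ℕ) := by
        apply mul_le_mul_of_nonneg_left _ (by positivity)
        apply pow_le_pow_left₀ (by positivity)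
        gcongr
    _ = Real.exp (2/ε) * (N:ℝ) ^ ((2:ℝ)/ε) * (ε ^ n * ((n:ℝ)/Real.exp 1)^n) := by
        rw [Real.mul_rpow (Real.exp_nonneg 1) (by positivity), Real.exp_one_rpow]
        rw [show ε * n / Real.exp 1 = ε * ((n:ℝ)/Real.exp 1) by ring, mul_pow]
        try ring
    _ ≤ Real.exp (2/ε) * (N:ℝ) ^ ((2:ℝ)/ε) * (ε ^ n * n.factorial) := by
        apply mul_le_mul_of_nonneg_left _ (by positivity)
        apply mul_le_mul_of_nonneg_left _ (by positivity)
        have := pow_self_le_exp_mul_factorial n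
        rw [div_pow, div_le_iff₀ (by positivity)]
        linarith [this]
    _ = Real.exp (2/ε) * (N:ℝ) ^ ((2:ℝ)/ε) * ε ^ n * n.factorial := by ring

lemma card_antidiag_le (N n : ℕ) :
    ((Finset.Nat.antidiagonalTuple N n).card : ℝ) ≤ 2^n * 2^N := by
  classical
  set S := Finset.Nat.antidiagonalTuple N n with hS
  have hsub : S ⊆ Fintype.piFinset (fun _ : Fin N => Finset.range (n+1)) := by
    intro d hd
    rw [Finset.Nat.mem_antidiagonalTuple] at hd
    rw [Fintype.mem_piFinset]
    intro i
    rw [Finset.mem_range, Nat.lt_succ_iff, ← hd]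
    exact Finset.single_le_sum (fun j _ => Nat.zero_le _) (Finset.mem_univ i)
  have hkey : (S.card : ℝ) * (1/2)^n ≤ 2^N := by
    have h1 : ∀ d ∈ S, ∏ i, ((1:ℝ)/2)^(d i) = (1/2)^n := by
      intro d hd
      rw [Finset.prod_pow_eq_pow_sum]
      congr 1
      rwa [Finset.Nat.mem_antidiagonalTuple] at hd
    have h2 : (S.card : ℝ) * (1/2)^n = ∑ d ∈ S, ∏ i, ((1:ℝ)/2)^(d i) := by
      rw [Finset.sum_congr rfl h1, Finset.sum_const, nsmul_eq_mul]
    rw [h2]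
    calc ∑ d ∈ S, ∏ i, ((1:ℝ)/2)^(d i)
        ≤ ∑ d ∈ Fintype.piFinset (fun _ : Fin N => Finset.range (n+1)),
            ∏ i, ((1:ℝ)/2)^(d i) := by
          apply Finset.sum_le_sum_of_subset_of_nonneg hsub
          intro d _ _
          positivity
      _ = ∏ _i : Fin N, (∑ k ∈ Finset.range (n+1), ((1:ℝ)/2)^k) :=
          (Finset.prod_univ_sum _ _).symm
      _ ≤ ∏ _i : Fin N, (2:ℝ) :=
          Finset.prod_le_prod (fun _ _ => by positivity)
            (fun _ _ => sum_geometric_two_le _)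
      _ = 2^N := by simp [Finset.prod_const]
  have h3 : ((1:ℝ)/2)^n = (2^n)⁻¹ := by
    rw [div_pow, one_pow, one_div]
  rw [h3] at hkey
  rw [mul_inv_le_iff₀ (by positivity)] at hkey
  linarith [hkey]

lemma zsmall_nonneg (α ε : ℝ) (N : ℕ) : 0 ≤ Zsmall α ε N := by
  apply Finset.sum_nonneg
  intro d _
  apply Finset.prod_nonneg
  intro i _
  positivity

lemma key (α ε : ℝ) (hα0 : 0 < α) (hα1 : α < 1) (hε0 : 0 < ε) (hε1 : ε < 1) (N : ℕ)
    (hN : (2:ℝ) ≤ ε * ((N:ℝ) - 1)) :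
    Zsmall α ε N ≤ (Real.exp (2*α/ε) / ε) * (N : ℝ) ^ (2 * α / ε)
      * ((N - 1).factorial : ℝ) ^ α * ε ^ (α * N) * 4 ^ N := by
  classical
  have hN2 : 2 ≤ N := by
    by_contra h
    push_neg at h
    interval_cases N <;> simp_all <;> nlinarith
  set n : ℕ := N - 1 with hn
  have hcast : ((n:ℕ):ℝ) = (N:ℝ) - 1 := by
    rw [hn]; push_cast [Nat.cast_sub (by omega : 1 ≤ N)]; ring
  have hnN : n ≤ N := by omega
  have h2 : (2:ℝ) ≤ ε * n := by rw [hcast]; exact hN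
  set B : ℝ := Real.exp (2/ε) * (N:ℝ) ^ ((2:ℝ)/ε) * ε ^ n * n.factorial with hB
  have hB0 : 0 ≤ B := by positivity
  have hterm : ∀ d ∈ (Finset.Nat.antidiagonalTuple N n).filter
      (fun d => ∀ i, (d i : ℝ) ≤ ε * ((N : ℝ) - 1)),
      ∏ i, ((d i).factorial : ℝ) ^ α ≤ B ^ α := by
    intro d hd
    rw [Finset.mem_filter] at hd
    obtain ⟨hd1, hd2⟩ := hd
    rw [Finset.Nat.mem_antidiagonalTuple] at hd1
    have hP := per_term ε hε0 hε1 h2 hnN d hd1 (fun i => by rw [← hcast] at hd2; exact hd2 i)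
    calc ∏ i, ((d i).factorial : ℝ) ^ α
        = (∏ i, ((d i).factorial : ℝ)) ^ α :=
          Real.finset_prod_rpow _ _ (fun i _ => by positivity) α
      _ ≤ B ^ α := Real.rpow_le_rpow (Finset.prod_nonneg fun i _ => by positivity) hP hα0.le
  have hsum : Zsmall α ε N ≤
      (((Finset.Nat.antidiagonalTuple N n).filter
        (fun d => ∀ i, (d i : ℝ) ≤ ε * ((N : ℝ) - 1))).card : ℝ) * B ^ α := by
    rw [Zsmall]
    have := Finset.sum_le_card_nsmul _ _ _ hterm
    rwa [nsmul_eq_mul] at this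
  have hcard : (((Finset.Nat.antidiagonalTuple N n).filter
      (fun d => ∀ i, (d i : ℝ) ≤ ε * ((N : ℝ) - 1))).card : ℝ) ≤ 4 ^ N := by
    calc (((Finset.Nat.antidiagonalTuple N n).filter _).card : ℝ)
        ≤ ((Finset.Nat.antidiagonalTuple N n).card : ℝ) := by
          exact_mod_cast Finset.card_filter_le _ _
      _ ≤ 2^n * 2^N := card_antidiag_le N n
      _ ≤ 2^N * 2^N := by
          have : (2:ℝ)^n ≤ 2^N := pow_le_pow_right₀ one_le_two hnN
          nlinarith [pow_pos (by norm_num : (0:ℝ) < 2) N]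
      _ = 4^N := by rw [← mul_pow]; norm_num
  have hBα : B ^ α ≤ (Real.exp (2*α/ε) / ε) * (N : ℝ) ^ (2 * α / ε)
      * ((n.factorial : ℝ) ^ α * ε ^ (α * N)) := by
    have hexp : (Real.exp (2/ε)) ^ α = Real.exp (2*α/ε) := by
      rw [← Real.exp_mul]; congr 1; ring
    have hNpow : (((N:ℝ) ^ ((2:ℝ)/ε)) : ℝ) ^ α = (N:ℝ) ^ (2*α/ε) := by
      rw [← Real.rpow_mul (Nat.cast_nonneg N)]; congr 1; ring
    have hεpow : ((ε ^ n : ℝ)) ^ α = ε ^ (α * (N:ℝ)) * ε ^ (-α) := by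
      rw [← Real.rpow_natCast ε n, ← Real.rpow_mul hε0.le, ← Real.rpow_add hε0]
      congr 1
      rw [hcast]; ring
    have hεneg : ε ^ (-α) ≤ ε⁻¹ := by
      have := Real.rpow_le_rpow_of_exponent_ge hε0 hε1.le
        (show (-1:ℝ) ≤ -α by linarith)
      rwa [Real.rpow_neg_one] at this
    calc B ^ α = (Real.exp (2/ε)) ^ α * ((N:ℝ) ^ ((2:ℝ)/ε)) ^ α
          * (ε ^ n) ^ α * (n.factorial : ℝ) ^ α := by
          rw [hB, Real.mul_rpow (by positivity) (by positivity),
            Real.mul_rpow (by positivity) (by positivity),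
            Real.mul_rpow (by positivity) (by positivity)]
      _ = Real.exp (2*α/ε) * (N:ℝ) ^ (2*α/ε)
          * (ε ^ (α * (N:ℝ)) * ε ^ (-α)) * (n.factorial : ℝ) ^ α := by
          rw [hexp, hNpow, hεpow]
      _ ≤ Real.exp (2*α/ε) * (N:ℝ) ^ (2*α/ε)
          * (ε ^ (α * (N:ℝ)) * ε⁻¹) * (n.factorial : ℝ) ^ α := by
          gcongr
      _ = (Real.exp (2*α/ε) / ε) * (N : ℝ) ^ (2 * α / ε)
          * ((n.factorial : ℝ) ^ α * ε ^ (α * (N:ℝ))) := by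
          field_simp
          try ring
  calc Zsmall α ε N ≤ (((Finset.Nat.antidiagonalTuple N n).filter
        (fun d => ∀ i, (d i : ℝ) ≤ ε * ((N : ℝ) - 1))).card : ℝ) * B ^ α := hsum
    _ ≤ 4 ^ N * B ^ α := by
        apply mul_le_mul_of_nonneg_right hcard (Real.rpow_nonneg hB0 α)
    _ ≤ 4 ^ N * ((Real.exp (2*α/ε) / ε) * (N : ℝ) ^ (2 * α / ε)
          * ((n.factorial : ℝ) ^ α * ε ^ (α * N))) := by
        apply mul_le_mul_of_nonneg_left hBα (by positivity)
    _ = (Real.exp (2*α/ε) / ε) * (N : ℝ) ^ (2 * α / ε)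
          * ((N - 1).factorial : ℝ) ^ α * ε ^ (α * N) * 4 ^ N := by
        rw [hn]; ring


/-- Eq. (k=0): the contribution from tuples with all parts `≤ ε(N−1)` is at most
`C·N^{2α/ε}·((N−1)!)^α·ε^{αN}·4^N`; in particular, for `ε` small enough it is
`o(((N−1)!)^α)`. -/
theorem stmt_10 (α : ℝ) (hα0 : 0 < α) (hα1 : α < 1) :
    (∀ ε : ℝ, 0 < ε → ε < 1 → ∃ C : ℝ, 0 < C ∧ ∀ N : ℕ, 1 ≤ N →
      Zsmall α ε N ≤
        C * (N : ℝ) ^ (2 * α / ε) * ((N - 1).factorial : ℝ) ^ α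
          * ε ^ (α * N) * 4 ^ N) ∧
    (∃ ε₀ : ℝ, 0 < ε₀ ∧ ∀ ε : ℝ, 0 < ε → ε ≤ ε₀ →
      (fun N : ℕ => Zsmall α ε N) =o[atTop]
        fun N : ℕ => (((N - 1).factorial : ℝ)) ^ α) := by
  have part1 : ∀ ε : ℝ, 0 < ε → ε < 1 → ∃ C : ℝ, 0 < C ∧ ∀ N : ℕ, 1 ≤ N →
      Zsmall α ε N ≤
        C * (N : ℝ) ^ (2 * α / ε) * ((N - 1).factorial : ℝ) ^ α
          * ε ^ (α * N) * 4 ^ N := by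
    intro ε hε0 hε1
    set N₀ : ℕ := ⌈2/ε⌉₊ + 2 with hN₀
    set D : ℕ → ℝ := fun k => (k:ℝ) ^ (2 * α / ε) * ((k - 1).factorial : ℝ) ^ α
        * ε ^ (α * k) * 4 ^ k with hDdef
    have hDnn : ∀ k, 0 ≤ D k := by
      intro k
      simp only [hDdef]
      positivity
    have hDpos : ∀ k : ℕ, 1 ≤ k → 0 < D k := by
      intro k hk
      have hk' : (0:ℝ) < k := by exact_mod_cast hk
      simp only [hDdef]
      have h1 : (0:ℝ) < (k:ℝ) ^ (2 * α / ε) := Real.rpow_pos_of_pos hk' _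
      have h2 : (0:ℝ) < ((k - 1).factorial : ℝ) ^ α :=
        Real.rpow_pos_of_pos (by exact_mod_cast Nat.factorial_pos _) _
      have h3 : (0:ℝ) < ε ^ (α * (k:ℝ)) := Real.rpow_pos_of_pos hε0 _
      have h4 : (0:ℝ) < (4:ℝ) ^ k := by positivity
      positivity
    set C₂ : ℝ := ∑ k ∈ Finset.range N₀, Zsmall α ε k / D k with hC₂
    have hC₂0 : 0 ≤ C₂ := Finset.sum_nonneg fun k _ =>
      div_nonneg (zsmall_nonneg α ε k) (hDnn k)
    set C : ℝ := C₂ + Real.exp (2*α/ε) / ε with hC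
    have hC0 : 0 < C := by
      rw [hC]
      have : (0:ℝ) < Real.exp (2*α/ε) / ε := by positivity
      linarith
    refine ⟨C, hC0, ?_⟩
    intro N hN1
    by_cases hbig : (2:ℝ) ≤ ε * ((N:ℝ) - 1)
    · have hk := key α ε hα0 hα1 hε0 hε1 N hbig
      refine hk.trans ?_
      have hCC : Real.exp (2*α/ε) / ε ≤ C := by rw [hC]; linarith
      have m1 : (0:ℝ) ≤ (N:ℝ) ^ (2*α/ε) := Real.rpow_nonneg (Nat.cast_nonneg N) _
      have m2 : (0:ℝ) ≤ ((N - 1).factorial : ℝ) ^ α :=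
        Real.rpow_nonneg (Nat.cast_nonneg _) _
      have m3 : (0:ℝ) ≤ ε ^ (α * (N:ℝ)) := Real.rpow_nonneg hε0.le _
      have m4 : (0:ℝ) ≤ (4:ℝ) ^ N := by positivity
      exact mul_le_mul_of_nonneg_right (mul_le_mul_of_nonneg_right
        (mul_le_mul_of_nonneg_right (mul_le_mul_of_nonneg_right hCC m1) m2) m3) m4
    · push_neg at hbig
      have hcast : ((N - 1 : ℕ) : ℝ) = (N:ℝ) - 1 := by
        push_cast [Nat.cast_sub hN1]; ring
      have hNlt : N < N₀ := by
        have h1 : (N:ℝ) - 1 < 2/ε := by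
          rw [lt_div_iff₀ hε0]
          linarith [mul_comm ε ((N:ℝ) - 1)]
        have h2 : ((N - 1 : ℕ) : ℝ) < (⌈2/ε⌉₊ : ℝ) + 1 := by
          rw [hcast]
          have := Nat.le_ceil (2/ε)
          linarith
        have h3 : (N - 1 : ℕ) < ⌈2/ε⌉₊ + 1 := by exact_mod_cast h2
        omega
      have hratio : Zsmall α ε N / D N ≤ C₂ :=
        Finset.single_le_sum
          (f := fun k => Zsmall α ε k / D k)
          (fun k _ => div_nonneg (zsmall_nonneg α ε k) (hDnn k))
          (Finset.mem_range.mpr hNlt)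
      have hDN := hDpos N hN1
      have h4 : Zsmall α ε N ≤ C₂ * D N := (div_le_iff₀ hDN).mp hratio
      calc Zsmall α ε N ≤ C₂ * D N := h4
        _ ≤ C * D N := by
            apply mul_le_mul_of_nonneg_right _ hDN.le
            rw [hC]
            have : (0:ℝ) < Real.exp (2*α/ε) / ε := by positivity
            linarith
        _ = C * (N : ℝ) ^ (2 * α / ε) * ((N - 1).factorial : ℝ) ^ α
            * ε ^ (α * N) * 4 ^ N := by
            simp only [hDdef]
            ring
  refine ⟨part1, ?_⟩
  refine ⟨(1/8:ℝ) ^ ((1:ℝ)/α), Real.rpow_pos_of_pos (by norm_num) _, ?_⟩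
  intro ε hε0 hεε₀
  have hε1 : ε < 1 :=
    lt_of_le_of_lt hεε₀ (Real.rpow_lt_one (by norm_num) (by norm_num) (by positivity))
  obtain ⟨C, hC0, hC⟩ := part1 ε hε0 hε1
  have hεα : ε ^ α ≤ 1/8 := by
    have h1 : ε ^ α ≤ ((1/8:ℝ) ^ ((1:ℝ)/α)) ^ α :=
      Real.rpow_le_rpow hε0.le hεε₀ hα0.le
    rwa [← Real.rpow_mul (by norm_num : (0:ℝ) ≤ 1/8),
      one_div_mul_cancel hα0.ne', Real.rpow_one] at h1
  set r : ℝ := 4 * ε ^ α with hr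
  have hεα0 : 0 ≤ ε ^ α := Real.rpow_nonneg hε0.le α
  have hr0 : 0 ≤ r := by positivity
  have hr1 : r < 1 := by rw [hr]; nlinarith
  set K : ℕ := ⌈2*α/ε⌉₊ with hK
  have htend : Tendsto (fun N : ℕ => C * ((N:ℝ)^K * r^N)) atTop (nhds 0) := by
    have h := (tendsto_pow_const_mul_const_pow_of_lt_one K hr0 hr1).const_mul C
    simpa using h
  rw [Asymptotics.isLittleO_iff]
  intro c hc
  have hev1 : ∀ᶠ N : ℕ in atTop, C * ((N:ℝ)^K * r^N) < c :=
    htend.eventually_lt_const hc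
  filter_upwards [hev1, eventually_ge_atTop 1] with N h1 hN1
  have hNR : (1:ℝ) ≤ (N:ℝ) := by exact_mod_cast hN1
  have hZnn := zsmall_nonneg α ε N
  have hfnn : (0:ℝ) ≤ ((N - 1).factorial : ℝ) ^ α :=
    Real.rpow_nonneg (Nat.cast_nonneg _) α
  rw [Real.norm_eq_abs, Real.norm_eq_abs, abs_of_nonneg hZnn, abs_of_nonneg hfnn]
  have hNK : (N:ℝ) ^ (2*α/ε) ≤ (N:ℝ) ^ K := by
    have h2 : (N:ℝ) ^ (2*α/ε) ≤ (N:ℝ) ^ ((K:ℕ):ℝ) :=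
      Real.rpow_le_rpow_of_exponent_le hNR (Nat.le_ceil _)
    rwa [Real.rpow_natCast] at h2
  have hεN : ε ^ (α * (N:ℝ)) = (ε ^ α) ^ N := by
    rw [Real.rpow_mul hε0.le, Real.rpow_natCast]
  calc Zsmall α ε N
      ≤ C * (N : ℝ) ^ (2 * α / ε) * ((N - 1).factorial : ℝ) ^ α
          * ε ^ (α * N) * 4 ^ N := hC N hN1
    _ = C * (N : ℝ) ^ (2 * α / ε) * ((N - 1).factorial : ℝ) ^ α
          * (ε ^ α) ^ N * 4 ^ N := by rw [hεN]
    _ ≤ C * (N : ℝ) ^ K * ((N - 1).factorial : ℝ) ^ α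
          * (ε ^ α) ^ N * 4 ^ N := by gcongr
    _ = (C * ((N:ℝ)^K * r^N)) * ((N - 1).factorial : ℝ) ^ α := by
        rw [hr]
        ring
    _ ≤ c * ((N - 1).factorial : ℝ) ^ α :=
        mul_le_mul_of_nonneg_right h1.le hfnn
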